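/- arXiv:2101.09661 — 2 statements merged into one kernel-verified Lean document; each statement's English description precedes it below -/
import Mathlib

section
/- Let X be a real linear n-normed space, W a subspace of X, and x₀ ∈ X with {x₀, b₂, ..., bₙ} linearly independent and d := inf_{x ∈ W} ‖x₀ - x, b₂, ..., bₙ‖ > 0. Then there exists a bounded b-linear functional T on X × ⟨b₂⟩ × ... × ⟨bₙ⟩ such that T(x₀, b₂, ..., bₙ) = 1, T(x, b₂, ..., bₙ) = 0 for all x ∈ W, and ‖T‖ = 1/d. -/
open Function Filter Topology

/-- An `n`-norm on a real vector space `X` (axioms N1-N4). -/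
structure NNorm (n : ℕ) (X : Type*) [AddCommGroup X] [Module ℝ X] where
  toFun : (Fin n → X) → ℝ
  eq_zero_iff : ∀ v : Fin n → X, toFun v = 0 ↔ ¬ LinearIndependent ℝ v
  perm_invariant : ∀ (σ : Equiv.Perm (Fin n)) (v : Fin n → X), toFun (v ∘ σ) = toFun v
  smul_eq : ∀ (α : ℝ) (v : Fin n → X) (i : Fin n),
      toFun (Function.update v i (α • v i)) = |α| * toFun v
  add_le : ∀ (v : Fin n → X) (i : Fin n) (x y : X),
      toFun (Function.update v i (x + y)) ≤
        toFun (Function.update v i x) + toFun (Function.update v i y)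

variable {n : ℕ} {X : Type*} [AddCommGroup X] [Module ℝ X]

/-- The seminorm `x ↦ ‖x, b₂, …, bₙ‖` obtained by fixing the vectors `b` in all slots
but the first. -/
noncomputable def bsem (N : NNorm (n + 1) X) (b : Fin (n + 1) → X) (x : X) : ℝ :=
  N.toFun (Function.update b 0 x)

section Generic

variable {V : Type*} [AddCommGroup V] [Module ℝ V]

/-- A `b`-linear functional: additive and homogeneous in its first argument. -/
def IsBLinear (T : V → ℝ) : Prop :=
  (∀ x y : V, T (x + y) = T x + T y) ∧ ∀ (k : ℝ) (x : V), T (k • x) = k * T x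

/-- A bounded `b`-linear functional with respect to a seminorm `p`. -/
def IsBddBLinearP (p : V → ℝ) (T : V → ℝ) : Prop :=
  IsBLinear T ∧ ∃ M > 0, ∀ x : V, |T x| ≤ M * p x

/-- The norm of a bounded `b`-linear functional with respect to a seminorm `p`. -/
noncomputable def bnormP (p : V → ℝ) (T : V → ℝ) : ℝ :=
  sInf {M : ℝ | 0 < M ∧ ∀ x : V, |T x| ≤ M * p x}

end Generic

/-- A bounded `b`-linear functional on `X × ⟨b₂⟩ × ⋯ × ⟨bₙ⟩`. -/
def IsBddBLinear (N : NNorm (n + 1) X) (b : Fin (n + 1) → X) (T : X → ℝ) : Prop :=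
  IsBddBLinearP (bsem N b) T

/-- The norm of a bounded `b`-linear functional on `X × ⟨b₂⟩ × ⋯ × ⟨bₙ⟩`. -/
noncomputable def bnorm (N : NNorm (n + 1) X) (b : Fin (n + 1) → X) (T : X → ℝ) : ℝ :=
  bnormP (bsem N b) T

/-- Convergence of a sequence in a linear `n`-normed space. -/
def NConv (N : NNorm (n + 1) X) (u : ℕ → X) (x : X) : Prop :=
  ∀ v : Fin (n + 1) → X,
    Tendsto (fun k => N.toFun (Function.update v 0 (u k - x))) atTop (nhds 0)

/-- A subspace is closed if it contains all limits of its convergent sequences. -/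
def IsClosedSub (N : NNorm (n + 1) X) (W : Submodule ℝ X) : Prop :=
  ∀ u : ℕ → X, (∀ k, u k ∈ W) → ∀ x : X, NConv N u x → x ∈ W

/-- `b`-weak convergence of a sequence. -/
def BWeakConv (N : NNorm (n + 1) X) (b : Fin (n + 1) → X) (u : ℕ → X) (x : X) : Prop :=
  ∀ T : X → ℝ, IsBddBLinear N b T →
    Tendsto (fun k => T (u k)) atTop (nhds (T x))

/-
Proof idea: `x ↦ ‖x, b₂, …, bₙ‖` is a seminorm `p` on `X`, and `d` is the `p`-distance from `x₀`
to `W`. The functional `w + t x₀ ↦ t d` on `W ⊕ ℝ x₀` is dominated by `p`, because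
`p (w + t x₀) = |t| p (x₀ + t⁻¹ w) ≥ |t| d`. A Hahn–Banach extension `g` satisfies `|g| ≤ p`, so
`T = d⁻¹ g` has norm at most `1 / d`; conversely `1 = T (x₀ - w) ≤ ‖T‖ p (x₀ - w)` for every
`w ∈ W` gives `‖T‖ ≥ 1 / d`.
-/

theorem isBddBLinearP_of_abs_le {V : Type*} [AddCommGroup V] [Module ℝ V] {p : V → ℝ}
    (T : Module.Dual ℝ V) {M : ℝ} (hM : 0 < M) (hT : ∀ x, |T x| ≤ M * p x) :
    IsBddBLinearP p T :=
  ⟨⟨map_add T, map_smul T⟩, M, hM, hT⟩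

namespace Seminorm

variable {V : Type*} [AddCommGroup V] [Module ℝ V] (p : Seminorm ℝ V) (W : Submodule ℝ V)

noncomputable def infDist (x : V) : ℝ :=
  sInf ((fun w => p (x - w)) '' (W : Set V))

variable {p W} {x : V}

theorem infDist_le {w : V} (hw : w ∈ W) : p.infDist W x ≤ p (x - w) :=
  csInf_le ⟨0, by rintro r ⟨w, -, rfl⟩; exact apply_nonneg p _⟩ ⟨w, hw, rfl⟩

theorem le_infDist {c : ℝ} (h : ∀ w ∈ W, c ≤ p (x - w)) : c ≤ p.infDist W x :=
  le_csInf ⟨_, 0, W.zero_mem, rfl⟩ (by rintro r ⟨w, hw, rfl⟩; exact h w hw)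

theorem infDist_nonneg : 0 ≤ p.infDist W x :=
  le_infDist fun _ _ => apply_nonneg p _

theorem infDist_eq_zero_of_mem (hx : x ∈ W) : p.infDist W x = 0 :=
  le_antisymm ((infDist_le (x := x) hx).trans_eq (by simp)) infDist_nonneg

theorem abs_mul_infDist_le {w : V} (hw : w ∈ W) (t : ℝ) :
    |t| * p.infDist W x ≤ p (w + t • x) := by
  rcases eq_or_ne t 0 with rfl | ht
  · simp
  have hrw : w + t • x = t • (x - -t⁻¹ • w) := by
    rw [smul_sub, smul_smul, mul_neg, mul_inv_cancel₀ ht, neg_smul, one_smul]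
    abel
  rw [hrw, map_smul_eq_mul, Real.norm_eq_abs]
  exact mul_le_mul_of_nonneg_left (infDist_le (W.smul_mem _ hw)) (abs_nonneg t)

theorem inv_le_infDist_of_abs_le {T : Module.Dual ℝ V} (hx : T x = 1) (hW : ∀ w ∈ W, T w = 0)
    {M : ℝ} (hM : 0 < M) (hT : ∀ y, |T y| ≤ M * p y) : M⁻¹ ≤ p.infDist W x :=
  le_infDist fun w hw => by
    have h := hT (x - w)
    rw [map_sub, hx, hW w hw, sub_zero, abs_one] at h
    rwa [inv_le_iff_one_le_mul₀' hM]

theorem bnormP_eq_inv_infDist (hd : 0 < p.infDist W x) {T : Module.Dual ℝ V} (hx : T x = 1)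
    (hW : ∀ w ∈ W, T w = 0) (hT : ∀ y, |T y| ≤ (p.infDist W x)⁻¹ * p y) :
    bnormP p T = (p.infDist W x)⁻¹ := by
  refine IsLeast.csInf_eq ⟨⟨inv_pos.2 hd, hT⟩, ?_⟩
  rintro M ⟨hM, hMT⟩
  exact (inv_le_comm₀ hd hM).2 (inv_le_infDist_of_abs_le hx hW hM hMT)

variable (p W x)

theorem exists_dual_eq_infDist :
    ∃ g : Module.Dual ℝ V, g x = p.infDist W x ∧ (∀ w ∈ W, g w = 0) ∧ ∀ y, |g y| ≤ p y := by
  by_cases hx : x ∈ W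
  · exact ⟨0, by simp [infDist_eq_zero_of_mem hx], fun _ _ => rfl, fun y => by simp⟩
  set f := LinearPMap.supSpanSingleton (⟨W, 0⟩ : V →ₗ.[ℝ] ℝ) x (p.infDist W x) hx
  have hf : ∀ (w : V) (hw : w ∈ W) (t : ℝ),
      f ⟨w + t • x, Submodule.mem_sup.2 ⟨w, hw, _, Submodule.mem_span_singleton.2 ⟨t, rfl⟩, rfl⟩⟩
        = t * p.infDist W x := fun w hw t =>
    (LinearPMap.supSpanSingleton_apply_mk _ _ _ hx w hw t).trans (by simp)
  have hfp : ∀ z : f.domain, f.toFun z ≤ p z := by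
    rintro ⟨z, hz⟩
    obtain ⟨w, hw, _, ht, rfl⟩ := Submodule.mem_sup.1 hz
    obtain ⟨t, rfl⟩ := Submodule.mem_span_singleton.1 ht
    calc f.toFun ⟨w + t • x, hz⟩ = t * p.infDist W x := hf w hw t
      _ ≤ |t| * p.infDist W x := mul_le_mul_of_nonneg_right (le_abs_self t) infDist_nonneg
      _ ≤ p (w + t • x) := abs_mul_infDist_le hw t
  obtain ⟨g, hgf, hgp⟩ := Module.Dual.exists_extension_of_le_seminorm_real f.domain f.toFun hfp
  refine ⟨g, ?_, fun w hw => ?_, hgp⟩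
  · simpa using (hgf _).trans (hf 0 W.zero_mem 1)
  · simpa using (hgf _).trans (hf w hw 0)

variable {p W x}

theorem exists_isBddBLinearP_bnormP_eq_inv_infDist (hd : 0 < p.infDist W x) :
    ∃ T : Module.Dual ℝ V, IsBddBLinearP p T ∧ T x = 1 ∧ (∀ w ∈ W, T w = 0) ∧
      bnormP p T = (p.infDist W x)⁻¹ := by
  obtain ⟨g, hgx, hgW, hgp⟩ := p.exists_dual_eq_infDist W x
  set T := (p.infDist W x)⁻¹ • g
  have hT : ∀ y, |T y| ≤ (p.infDist W x)⁻¹ * p y := fun y => by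
    rw [LinearMap.smul_apply, smul_eq_mul, abs_mul, abs_of_pos (inv_pos.2 hd)]
    exact mul_le_mul_of_nonneg_left (hgp y) (inv_nonneg.2 hd.le)
  have hTx : T x = 1 := by simp [T, hgx, hd.ne']
  have hTW : ∀ w ∈ W, T w = 0 := fun w hw => by simp [T, hgW w hw]
  exact ⟨T, isBddBLinearP_of_abs_le T (inv_pos.2 hd) hT, hTx, hTW,
    bnormP_eq_inv_infDist hd hTx hTW hT⟩

end Seminorm

noncomputable def bSeminorm (N : NNorm (n + 1) X) (b : Fin (n + 1) → X) : Seminorm ℝ X :=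
  Seminorm.of (bsem N b) (N.add_le b 0) fun α x => by
    simpa [bsem] using N.smul_eq α (update b 0 x) 0

theorem stmt2_general (N : NNorm (n + 1) X) (b : Fin (n + 1) → X)
    (W : Submodule ℝ X) (x₀ : X)
    (d : ℝ)
    (hdinf : d = sInf ((fun w => bsem N b (x₀ - w)) '' (W : Set X))) (hd : 0 < d) :
    ∃ T : X → ℝ, IsBddBLinear N b T ∧ T x₀ = 1 ∧ (∀ x ∈ W, T x = 0) ∧
      bnorm N b T = 1 / d := by
  have hdist : d = (bSeminorm N b).infDist W x₀ := hdinf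
  subst hdist
  obtain ⟨T, hT⟩ := Seminorm.exists_isBddBLinearP_bnormP_eq_inv_infDist hd
  rw [one_div]
  exact ⟨T, hT⟩

theorem stmt2 (N : NNorm (n + 1) X) (b : Fin (n + 1) → X)
    (hdim : ↑(n + 1) ≤ Module.rank ℝ X) (W : Submodule ℝ X) (x₀ : X)
    (hli : LinearIndependent ℝ (Function.update b 0 x₀)) (d : ℝ)
    (hdinf : d = sInf ((fun w => bsem N b (x₀ - w)) '' (W : Set X))) (hd : 0 < d) :
    ∃ T : X → ℝ, IsBddBLinear N b T ∧ T x₀ = 1 ∧ (∀ x ∈ W, T x = 0) ∧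
      bnorm N b T = 1 / d :=
  stmt2_general N b W x₀ d hdinf hd
end

section
/- Let X be a real linear n-normed space. For each x ∈ X define φ_{(x,F)} : X*_F → ℝ by φ_{(x,F)}(T) = T(x, b₂, ..., bₙ). Then φ_{(x,F)} is a bounded linear functional on X*_F, and ‖φ_{(x,F)}‖ = ‖x, b₂, ..., bₙ‖. -/
open Function Filter Topology

variable {n : ℕ} {X : Type*} [AddCommGroup X] [Module ℝ X]

/-! The map `x ↦ ‖x, b₂, …, bₙ‖` is a seminorm (axioms N3 and N4 in the first slot). For a
seminorm `p` on a real vector space and any `x`, Hahn–Banach gives a linear `g` with `|g| ≤ p`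
and `g x = p x`; such a `g` has norm at most `1`, so `p x` is attained in the supremum, while
`|T x| ≤ p x ‖T‖` bounds it from above. -/

section Generic

variable {V : Type*}

theorem bnormP_le {p T : V → ℝ} {M : ℝ} (hM : 0 < M) (hT : ∀ x, |T x| ≤ M * p x) :
    bnormP p T ≤ M :=
  csInf_le ⟨0, fun _ hm => hm.1.le⟩ ⟨hM, hT⟩

variable [AddCommGroup V] [Module ℝ V]

theorem LinearMap.isBLinear (g : V →ₗ[ℝ] ℝ) : IsBLinear g :=
  ⟨g.map_add, g.map_smul⟩

theorem abs_le_mul_bnormP {p T : V → ℝ} (hT : IsBddBLinearP p T) (x : V) :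
    |T x| ≤ p x * bnormP p T := by
  obtain ⟨-, M, hM, hTM⟩ := hT
  have hpx : 0 ≤ p x := nonneg_of_mul_nonneg_right ((abs_nonneg _).trans (hTM x)) hM
  rcases hpx.eq_or_lt with hpx | hpx
  · simpa [← hpx] using hTM x
  · rw [mul_comm, ← div_le_iff₀ hpx]
    exact le_csInf ⟨M, hM, hTM⟩ fun m hm => (div_le_iff₀ hpx).2 (hm.2 x)

theorem Seminorm.exists_dual_abs_le_and_apply_eq (p : Seminorm ℝ V) (x : V) :
    ∃ g : Module.Dual ℝ V, (∀ y, |g y| ≤ p y) ∧ g x = p x := by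
  by_cases hx : x = 0
  · exact ⟨0, fun y => by simp, by simp [hx]⟩
  let f : V →ₗ.[ℝ] ℝ := LinearPMap.mkSpanSingleton x (p x) hx
  have hfp : ∀ z : f.domain, f z ≤ p z := by
    rintro ⟨_, hz⟩
    obtain ⟨c, rfl⟩ := Submodule.mem_span_singleton.1 hz
    calc f ⟨c • x, hz⟩ = c * p x := LinearPMap.mkSpanSingleton'_apply _ _ _ c hz
      _ ≤ |c| * p x := mul_le_mul_of_nonneg_right (le_abs_self c) (apply_nonneg p x)
      _ = p (c • x) := (map_smul_eq_mul p c x).symm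
  obtain ⟨g, hgf, hgp⟩ := Module.Dual.exists_extension_of_le_seminorm_real f.domain f.toFun hfp
  exact ⟨g, hgp, (hgf ⟨x, Submodule.mem_span_singleton_self x⟩).trans
    (LinearPMap.mkSpanSingleton_apply ℝ ℝ hx _)⟩

theorem Seminorm.isGreatest_abs_apply_bnormP_le_one (p : Seminorm ℝ V) (x : V) :
    IsGreatest {r : ℝ | ∃ T : V → ℝ, IsBddBLinearP p T ∧ bnormP p T ≤ 1 ∧ r = |T x|} (p x) := by
  refine ⟨?_, ?_⟩
  · obtain ⟨g, hg, hgx⟩ := p.exists_dual_abs_le_and_apply_eq x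
    exact ⟨g, ⟨g.isBLinear, 1, one_pos, by simpa using hg⟩, bnormP_le one_pos (by simpa using hg),
      by rw [hgx, abs_of_nonneg (apply_nonneg p x)]⟩
  · rintro _ ⟨T, hT, hT1, rfl⟩
    exact (abs_le_mul_bnormP hT x).trans (mul_le_of_le_one_right (apply_nonneg p x) hT1)

end Generic

namespace NNorm

noncomputable def bseminorm (N : NNorm (n + 1) X) (b : Fin (n + 1) → X) : Seminorm ℝ X :=
  Seminorm.of (bsem N b) (N.add_le b 0) fun c x => by
    simpa [bsem] using N.smul_eq c (update b 0 x) 0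

end NNorm

theorem stmt6_general (N : NNorm (n + 1) X) (b : Fin (n + 1) → X) (x : X) :
    (∀ (T S : X → ℝ) (α β : ℝ), (α • T + β • S) x = α * T x + β * S x) ∧
    (∀ T : X → ℝ, IsBddBLinear N b T → |T x| ≤ bsem N b x * bnorm N b T) ∧
    sSup {r : ℝ | ∃ T : X → ℝ, IsBddBLinear N b T ∧ bnorm N b T ≤ 1 ∧ r = |T x|} =
      bsem N b x :=
  ⟨fun T S α β => by simp [smul_eq_mul], fun _ hT => abs_le_mul_bnormP hT x,
    ((N.bseminorm b).isGreatest_abs_apply_bnormP_le_one x).csSup_eq⟩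

theorem stmt6 (N : NNorm (n + 1) X) (b : Fin (n + 1) → X)
    (hdim : ↑(n + 1) ≤ Module.rank ℝ X) (x : X) :
    (∀ (T S : X → ℝ) (α β : ℝ), (α • T + β • S) x = α * T x + β * S x) ∧
    (∀ T : X → ℝ, IsBddBLinear N b T → |T x| ≤ bsem N b x * bnorm N b T) ∧
    sSup {r : ℝ | ∃ T : X → ℝ, IsBddBLinear N b T ∧ bnorm N b T ≤ 1 ∧ r = |T x|} =
      bsem N b x :=
  stmt6_general N b x
end
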